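/- Let π ∈ S_{n+1} be an involution whose canonic form contains the transposition (i, n+1), and let π_n ∈ S_n be the involution obtained as the restriction of π to {1,…,n} after removing i and n+1 from its support, i.e., π_n fixes i and agrees with π elsewhere on {1,…,n}. Then 𝔄(π) = 𝔄(π_n) + #{a < i : π_n(a) = a}. -/

import Mathlib

open Matrix Finset

/-- `M` is a monomial anti-symmetric matrix with nonzero entries `±1`,
the `+1`'s above the main diagonal and the `-1`'s below it. -/
def GoodMat {n : ℕ} (M : Matrix (Fin n) (Fin n) ℂ) : Prop :=
  Mᵀ = -M ∧
  (∀ i j k : Fin n, M i j ≠ 0 → M i k ≠ 0 → j = k) ∧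
  (∀ i j k : Fin n, M j i ≠ 0 → M k i ≠ 0 → j = k) ∧
  (∀ i j : Fin n, M i j = 0 ∨ (i < j ∧ M i j = 1) ∨ (j < i ∧ M i j = -1))

/-- The monomial anti-symmetric `±1`-matrix associated to an involution. -/
def invMat {n : ℕ} (π : Equiv.Perm (Fin n)) : Matrix (Fin n) (Fin n) ℂ :=
  fun i j => if i < j ∧ π i = j then 1 else if j < i ∧ π j = i then -1 else 0

/-- Rank-control function: rank of the upper-left `k × l` submatrix
(with natural-number indices, clipped at `n`; in particular `rc A 0 l = 0`). -/
noncomputable def rc {n : ℕ} (A : Matrix (Fin n) (Fin n) ℂ) (k l : ℕ) : ℕ :=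
  (A.submatrix (fun x : Fin (min k n) => Fin.castLE (min_le_right k n) x)
    (fun y : Fin (min l n) => Fin.castLE (min_le_right l n) y)).rank

/-- The parameter `𝔄`: the number of equalities along the diagonals of the
strict upper triangle of the rank-control matrix, with `r₀ₖ := 0`. -/
noncomputable def AA {n : ℕ} (A : Matrix (Fin n) (Fin n) ℂ) : ℕ :=
  (Finset.univ.filter (fun p : Fin n × Fin n =>
    (p.1 : ℕ) < (p.2 : ℕ) ∧
      rc A ((p.1 : ℕ) + 1) ((p.2 : ℕ) + 1) = rc A (p.1 : ℕ) (p.2 : ℕ))).card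

/-- Number of inversions of a word. -/
def inversions (w : List ℕ) : ℕ :=
  ((Finset.range w.length ×ˢ Finset.range w.length).filter
    (fun p => p.1 < p.2 ∧ w.getD p.2 0 < w.getD p.1 0)).card

/-- `l` is the canonic form of the involution `π`: the list of the disjoint
transpositions `(iₜ, jₜ)` of `π` with `iₜ < jₜ`, sorted by first entries. -/
def IsCanonic {n : ℕ} (π : Equiv.Perm (Fin n)) (l : List (Fin n × Fin n)) : Prop :=
  (∀ p ∈ l, p.1 < p.2 ∧ π p.1 = p.2) ∧
  (∀ a : Fin n, a < π a → (a, π a) ∈ l) ∧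
  l.Pairwise (fun p q => p.1 < q.1)

/-- The word `i₁ j₁ i₂ j₂ ⋯ iₖ jₖ` (with 1-indexed letters) of a canonic form. -/
def wordOf {n : ℕ} (l : List (Fin n × Fin n)) : List ℕ :=
  l.flatMap fun p => [(p.1 : ℕ) + 1, (p.2 : ℕ) + 1]

lemma rank_mono {m l : ℕ} (A : Matrix (Fin m) (Fin l) ℂ)
    (hrow : ∀ (a : Fin m) (b c : Fin l), A a b ≠ 0 → A a c ≠ 0 → b = c)
    (hcol : ∀ (a : Fin l) (b c : Fin m), A b a ≠ 0 → A c a ≠ 0 → b = c) :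
    A.rank = (Finset.univ.filter (fun p : Fin m × Fin l => A p.1 p.2 ≠ 0)).card := by
  classical
  set T := {j : Fin l // ∃ a, A a j ≠ 0} with hT
  have hex : ∀ j : T, ∃ a, A a (j : Fin l) ≠ 0 := fun j => j.2
  choose r hr using hex
  have rinj : Function.Injective r := by
    intro j j' h
    exact Subtype.ext (hrow (r j) _ _ (hr j) (by rw [h]; exact hr j'))
  set v : T → (Fin m → ℂ) := fun j => Aᵀ (j : Fin l) with hv
  have hsingle : ∀ j : T, v j = Pi.single (r j) (A (r j) (j : Fin l)) := by
    intro j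
    funext a
    by_cases ha : a = r j
    · subst ha; simp [hv, Matrix.transpose_apply]
    · rw [Pi.single_eq_of_ne ha]
      by_contra h
      exact ha (hcol _ _ _ h (hr j))
  have hli : LinearIndependent ℂ v := by
    have h1 : LinearIndependent ℂ (fun j : T => (Pi.single (r j) 1 : Fin m → ℂ)) := by
      have h0 := (Pi.basisFun ℂ (Fin m)).linearIndependent.comp r rinj
      convert h0 using 1
      funext j
      simp [Function.comp]
    have h2 := h1.units_smul (fun j => Units.mk0 (A (r j) (j : Fin l)) (hr j))
    convert h2 using 1
    funext j
    rw [hsingle j]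
    simp only [Pi.smul_apply', Units.smul_def, Units.val_mk0]
    rw [← Pi.single_smul, smul_eq_mul, mul_one]
  have hspan : Submodule.span ℂ (Set.range Aᵀ) = Submodule.span ℂ (Set.range v) := by
    apply le_antisymm
    · rw [Submodule.span_le]
      rintro _ ⟨j, rfl⟩
      by_cases hj : ∃ a, A a j ≠ 0
      · exact Submodule.subset_span ⟨⟨j, hj⟩, rfl⟩
      · push_neg at hj
        have : Aᵀ j = 0 := by funext a; exact hj a
        rw [this]; exact Submodule.zero_mem _
    · rw [Submodule.span_le]
      rintro _ ⟨j, rfl⟩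
      exact Submodule.subset_span ⟨(j : Fin l), rfl⟩
  rw [Matrix.rank_eq_finrank_span_cols, show A.col = Aᵀ from rfl, hspan, finrank_span_eq_card hli]
  rw [Fintype.card_eq_nat_card, hT, Nat.card_eq_fintype_card, Fintype.card_subtype]
  symm
  apply Finset.card_bij (fun (p : Fin m × Fin l) _ => p.2)
  · intro p hp
    simp only [Finset.mem_filter, Finset.mem_univ, true_and] at hp ⊢
    exact ⟨p.1, hp⟩
  · intro p hp p' hp' h
    simp only [Finset.mem_filter, Finset.mem_univ, true_and] at hp hp'
    have : p.1 = p'.1 := hcol p.2 _ _ hp (by rw [h]; exact hp')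
    exact Prod.ext this h
  · intro j hj
    simp only [Finset.mem_filter, Finset.mem_univ, true_and] at hj
    obtain ⟨a, ha⟩ := hj
    exact ⟨(a, j), by simpa using ha, rfl⟩

lemma invMat_ne_zero_iff {n : ℕ} (π : Equiv.Perm (Fin n)) (hinv : ∀ a, π (π a) = a)
    (a b : Fin n) : invMat π a b ≠ 0 ↔ (π a = b ∧ a ≠ b) := by
  unfold invMat
  constructor
  · intro h
    by_cases h1 : a < b ∧ π a = b
    · exact ⟨h1.2, ne_of_lt h1.1⟩
    · by_cases h2 : b < a ∧ π b = a
      · exact ⟨by rw [← h2.2, hinv], ne_of_gt h2.1⟩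
      · simp [h1, h2] at h
  · rintro ⟨hab, hne⟩
    rcases lt_or_gt_of_ne hne with h | h
    · simp [h, hab]
    · have : ¬ (a < b ∧ π a = b) := fun hc => absurd hc.1 (not_lt_of_gt h)
      simp only [this, if_false]
      have hb : π b = a := by rw [← hab, hinv]
      simp [h, hb]

lemma rc_count {n : ℕ} (π : Equiv.Perm (Fin n)) (hinv : ∀ a, π (π a) = a) (k l : ℕ) :
    rc (invMat π) k l =
      (Finset.univ.filter (fun a : Fin n =>
        (a : ℕ) < k ∧ ((π a : Fin n) : ℕ) < l ∧ π a ≠ a)).card := by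
  classical
  unfold rc
  set B := (invMat π).submatrix
    (fun x : Fin (min k n) => Fin.castLE (min_le_right k n) x)
    (fun y : Fin (min l n) => Fin.castLE (min_le_right l n) y) with hB
  have hBne : ∀ x y, B x y ≠ 0 ↔
      (π (Fin.castLE (min_le_right k n) x) = Fin.castLE (min_le_right l n) y ∧
        (Fin.castLE (min_le_right k n) x : Fin n) ≠ Fin.castLE (min_le_right l n) y) := by
    intro x y
    rw [hB]
    exact invMat_ne_zero_iff π hinv _ _
  rw [rank_mono]
  · apply Finset.card_bij (fun (p : Fin (min k n) × Fin (min l n)) _ =>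
      Fin.castLE (min_le_right k n) p.1)
    · intro p hp
      simp only [Finset.mem_filter, Finset.mem_univ, true_and] at hp ⊢
      rw [hBne] at hp
      obtain ⟨h1, h2⟩ := hp
      refine ⟨lt_of_lt_of_le p.1.2 (min_le_left k n), ?_, by rw [h1]; exact h2.symm⟩
      rw [h1]
      exact lt_of_lt_of_le p.2.2 (min_le_left l n)
    · intro p hp p' hp' h
      simp only [Finset.mem_filter, Finset.mem_univ, true_and] at hp hp'
      rw [hBne] at hp hp'
      have h1 : p.1 = p'.1 := (Fin.castLE_injective _) h
      refine Prod.ext h1 ?_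
      apply (Fin.castLE_injective (min_le_right l n))
      rw [← hp.1, ← hp'.1, h]
    · intro a ha
      simp only [Finset.mem_filter, Finset.mem_univ, true_and] at ha
      obtain ⟨h1, h2, h3⟩ := ha
      refine ⟨(⟨(a : ℕ), lt_min h1 a.2⟩, ⟨((π a : Fin n) : ℕ), lt_min h2 (π a).2⟩), ?_, rfl⟩
      simp only [Finset.mem_filter, Finset.mem_univ, true_and]
      rw [hBne]
      constructor
      · apply Fin.ext
        simp
      · intro hc
        apply h3
        apply Fin.ext
        have := congrArg Fin.val hc
        simp at this
        omega
  · intro x y y' h h'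
    rw [hBne] at h h'
    exact (Fin.castLE_injective _) (h.1.symm.trans h'.1) ▸ rfl
  · intro y x x' h h'
    rw [hBne] at h h'
    exact (Fin.castLE_injective _) (π.injective (h.1.trans h'.1.symm)) ▸ rfl

lemma key {n : ℕ} (π : Equiv.Perm (Fin n)) (hinv : ∀ a, π (π a) = a) (p q : Fin n)
    (hpq : (p : ℕ) < (q : ℕ)) :
    (rc (invMat π) ((p : ℕ) + 1) ((q : ℕ) + 1) = rc (invMat π) (p : ℕ) (q : ℕ)) ↔
      ((π p = p ∨ (q : ℕ) < ((π p : Fin n) : ℕ)) ∧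
        (π q = q ∨ (p : ℕ) ≤ ((π q : Fin n) : ℕ))) := by
  classical
  rw [rc_count π hinv, rc_count π hinv]
  set S₁ := Finset.univ.filter (fun a : Fin n =>
    (a : ℕ) < (p : ℕ) + 1 ∧ ((π a : Fin n) : ℕ) < (q : ℕ) + 1 ∧ π a ≠ a) with hS1
  set S₀ := Finset.univ.filter (fun a : Fin n =>
    (a : ℕ) < (p : ℕ) ∧ ((π a : Fin n) : ℕ) < (q : ℕ) ∧ π a ≠ a) with hS0
  have hsub : S₀ ⊆ S₁ := by
    intro a ha
    simp only [hS0, hS1, Finset.mem_filter, Finset.mem_univ, true_and] at ha ⊢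
    exact ⟨by omega, by omega, ha.2.2⟩
  have hiff : S₁.card = S₀.card ↔ S₁ ⊆ S₀ := by
    constructor
    · intro h
      rw [Finset.eq_of_subset_of_card_le hsub h.le]
    · intro h
      exact congrArg Finset.card (Finset.Subset.antisymm h hsub)
  rw [hiff]
  constructor
  · intro h
    constructor
    · by_contra hc
      push_neg at hc
      obtain ⟨h1, h2⟩ := hc
      have hp1 : p ∈ S₁ := by
        simp only [hS1, Finset.mem_filter, Finset.mem_univ, true_and]
        exact ⟨by omega, by omega, h1⟩
      have := h hp1
      simp only [hS0, Finset.mem_filter, Finset.mem_univ, true_and] at this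
      omega
    · by_contra hc
      push_neg at hc
      obtain ⟨h1, h2⟩ := hc
      set a := π q with ha
      have haq : π a = q := hinv q
      have hane : π a ≠ a := by
        rw [haq]; intro hc2; exact h1 (hc2 ▸ haq ▸ rfl)
      have hp1 : a ∈ S₁ := by
        simp only [hS1, Finset.mem_filter, Finset.mem_univ, true_and]
        refine ⟨by omega, ?_, hane⟩
        rw [haq]; omega
      have := h hp1
      simp only [hS0, Finset.mem_filter, Finset.mem_univ, true_and] at this
      rw [haq] at this
      omega
  · rintro ⟨h1, h2⟩ a ha
    simp only [hS1, Finset.mem_filter, Finset.mem_univ, true_and] at ha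
    obtain ⟨ha1, ha2, ha3⟩ := ha
    simp only [hS0, Finset.mem_filter, Finset.mem_univ, true_and]
    have hap : (a : ℕ) ≠ (p : ℕ) := by
      intro hc
      have : a = p := Fin.ext hc
      subst this
      rcases h1 with h | h
      · exact ha3 h
      · omega
    refine ⟨by omega, ?_, ha3⟩
    have haq : ((π a : Fin n) : ℕ) ≠ (q : ℕ) := by
      intro hc
      have hq : π a = q := Fin.ext hc
      have : π q = a := by rw [← hq, hinv]
      rcases h2 with h | h
      · rw [this] at h
        subst h
        exact ha3 hq
      · rw [this] at h
        omega
    omega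

lemma AA_eq {m : ℕ} (σ : Equiv.Perm (Fin m)) (hs : ∀ a, σ (σ a) = a) :
    AA (invMat σ) = (Finset.univ.filter (fun p : Fin m × Fin m =>
      (p.1 : ℕ) < (p.2 : ℕ) ∧
      ((σ p.1 = p.1 ∨ (p.2 : ℕ) < ((σ p.1 : Fin m) : ℕ)) ∧
       (σ p.2 = p.2 ∨ (p.1 : ℕ) ≤ ((σ p.2 : Fin m) : ℕ))))).card := by
  unfold AA
  congr 1
  apply Finset.filter_congr
  intro x _
  constructor
  · rintro ⟨h1, h2⟩; exact ⟨h1, (key σ hs x.1 x.2 h1).mp h2⟩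
  · rintro ⟨h1, h2⟩; exact ⟨h1, (key σ hs x.1 x.2 h1).mpr h2⟩

/-- If the involution `π ∈ S_{n+1}` contains the transposition `(i, n+1)` and
`πₙ ∈ Sₙ` agrees with `π` on `{1,…,n} \ {i}` and fixes `i`, then
`𝔄(π) = 𝔄(πₙ) + #{a < i : πₙ(a) = a}`. -/
theorem stmt13 (n : ℕ) (π : Equiv.Perm (Fin (n + 1))) (hπ : π * π = 1)
    (i : Fin n) (hi : π (Fin.last n) = i.castSucc)
    (πn : Equiv.Perm (Fin n)) (hfix : πn i = i)
    (hres : ∀ a : Fin n, a ≠ i → ((πn a : ℕ)) = ((π a.castSucc : ℕ))) :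
    AA (invMat π) = AA (invMat πn) + Nat.card {a : Fin n // a < i ∧ πn a = a} := by
  classical
  have hinv : ∀ a, π (π a) = a := by
    intro a
    have := Equiv.ext_iff.mp hπ a
    simpa [Equiv.Perm.mul_apply] using this
  have hi' : π i.castSucc = Fin.last n := by rw [← hi, hinv]
  have hlastval : ((Fin.last n : Fin (n + 1)) : ℕ) = n := rfl
  have hival : ((i.castSucc : Fin (n + 1)) : ℕ) = (i : ℕ) := rfl
  have hvalcs : ∀ a : Fin n, ((a.castSucc : Fin (n + 1)) : ℕ) = (a : ℕ) := fun a => rfl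
  have hval : ∀ a : Fin n, a ≠ i → π a.castSucc = (πn a).castSucc := by
    intro a ha
    apply Fin.ext
    rw [hvalcs]
    exact (hres a ha).symm
  have hne_i : ∀ a : Fin n, πn a = a → a ≠ i → True := fun _ _ _ => trivial
  have hinvn : ∀ a, πn (πn a) = a := by
    intro a
    by_cases ha : a = i
    · subst ha; rw [hfix, hfix]
    · have hb : πn a ≠ i := fun h => ha (πn.injective (h.trans hfix.symm))
      apply Fin.ext
      have h1 := hval a ha
      have h2 := hval (πn a) hb
      have : π (π a.castSucc) = (πn (πn a)).castSucc := by rw [h1, h2]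
      rw [hinv] at this
      have := congrArg Fin.val this
      rw [hvalcs, hvalcs] at this
      omega
  have hfixiff : ∀ a : Fin n, a ≠ i → (π a.castSucc = a.castSucc ↔ πn a = a) := by
    intro a ha
    rw [hval a ha]
    exact Fin.castSucc_inj
  have hclause1 : ∀ (a : Fin n) (t : ℕ), t < n →
      ((π a.castSucc = a.castSucc ∨ t < ((π a.castSucc : Fin (n + 1)) : ℕ)) ↔
        (πn a = a ∨ t < ((πn a : Fin n) : ℕ))) := by
    intro a t ht
    by_cases ha : a = i
    · subst ha
      rw [hi']
      constructor
      · intro _; exact Or.inl hfix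
      · intro _; right; rw [hlastval]; exact ht
    · rw [hfixiff a ha, hval a ha, hvalcs]
  have hclause2 : ∀ (a : Fin n) (s : ℕ), s ≤ n →
      ((π a.castSucc = a.castSucc ∨ s ≤ ((π a.castSucc : Fin (n + 1)) : ℕ)) ↔
        (πn a = a ∨ s ≤ ((πn a : Fin n) : ℕ))) := by
    intro a s hs
    by_cases ha : a = i
    · subst ha
      rw [hi']
      constructor
      · intro _; exact Or.inl hfix
      · intro _; right; rw [hlastval]; exact hs
    · rw [hfixiff a ha, hval a ha, hvalcs]
  set down : Fin (n + 1) → Fin n := fun x => if h : (x : ℕ) < n then ⟨(x : ℕ), h⟩ else i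
    with hdowndef
  have hdown : ∀ x : Fin (n + 1), (x : ℕ) < n → ((down x : Fin n) : ℕ) = (x : ℕ) := by
    intro x h; simp [hdowndef, h]
  have hdowncs : ∀ a : Fin n, down a.castSucc = a := by
    intro a
    apply Fin.ext
    rw [hdown _ (by rw [hvalcs]; exact a.2), hvalcs]
  have hup : ∀ x : Fin (n + 1), (x : ℕ) < n → (down x).castSucc = x := by
    intro x h
    apply Fin.ext
    rw [hvalcs, hdown x h]
  rw [AA_eq π hinv, AA_eq πn hinvn]
  set P := (Finset.univ.filter (fun p : Fin (n + 1) × Fin (n + 1) =>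
      (p.1 : ℕ) < (p.2 : ℕ) ∧
      ((π p.1 = p.1 ∨ (p.2 : ℕ) < ((π p.1 : Fin (n + 1)) : ℕ)) ∧
       (π p.2 = p.2 ∨ (p.1 : ℕ) ≤ ((π p.2 : Fin (n + 1)) : ℕ))))) with hP
  set Q := (Finset.univ.filter (fun p : Fin n × Fin n =>
      (p.1 : ℕ) < (p.2 : ℕ) ∧
      ((πn p.1 = p.1 ∨ (p.2 : ℕ) < ((πn p.1 : Fin n) : ℕ)) ∧
       (πn p.2 = p.2 ∨ (p.1 : ℕ) ≤ ((πn p.2 : Fin n) : ℕ))))) with hQ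
  have hsplit := Finset.card_filter_add_card_filter_not
    (s := P) (p := fun p : Fin (n + 1) × Fin (n + 1) => (p.2 : ℕ) < n)
  rw [← hsplit]
  have hpart1 : (P.filter (fun p => (p.2 : ℕ) < n)).card = Q.card := by
    apply Finset.card_bij' (fun p _ => (down p.1, down p.2)) (fun q _ => (q.1.castSucc, q.2.castSucc))
    · intro p hp
      rw [Finset.mem_filter, hP, Finset.mem_filter] at hp
      obtain ⟨⟨_, h1, h2, h3⟩, h4⟩ := hp
      have hp1n : (p.1 : ℕ) < n := lt_of_lt_of_le h1 (Nat.le_of_lt_succ (Nat.lt_succ_of_lt h4))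
      rw [hQ, Finset.mem_filter]
      refine ⟨Finset.mem_univ _, ?_, ?_, ?_⟩
      · rw [hdown p.1 hp1n, hdown p.2 h4]; exact h1
      · rw [← hclause1 (down p.1) _ (down p.2).2]
        rw [hup p.1 hp1n, hdown p.2 h4]
        exact h2
      · rw [← hclause2 (down p.2) _ (le_of_lt (down p.1).2)]
        rw [hup p.2 h4, hdown p.1 hp1n]
        exact h3
    · intro q hq
      rw [hQ, Finset.mem_filter] at hq
      obtain ⟨_, h1, h2, h3⟩ := hq
      rw [Finset.mem_filter, hP, Finset.mem_filter]
      have hq2 : ((q.2.castSucc : Fin (n + 1)) : ℕ) < n := by rw [hvalcs]; exact q.2.2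
      refine ⟨⟨Finset.mem_univ _, ?_, ?_, ?_⟩, hq2⟩
      · rw [hvalcs, hvalcs]; exact h1
      · rw [hclause1 q.1 _ (by rw [hvalcs]; exact q.2.2)]
        rw [hvalcs]
        exact h2
      · rw [hclause2 q.2 _ (by rw [hvalcs]; omega)]
        rw [hvalcs]
        exact h3
    · intro p hp
      rw [Finset.mem_filter] at hp
      have h4 := hp.2
      rw [hP, Finset.mem_filter] at hp
      have hp1n : (p.1 : ℕ) < n := lt_of_lt_of_le hp.1.2.1 (by omega)
      exact Prod.ext (hup p.1 hp1n) (hup p.2 h4)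
    · intro q _
      exact Prod.ext (hdowncs q.1) (hdowncs q.2)
  have hpart2 : (P.filter (fun p => ¬ (p.2 : ℕ) < n)).card =
      Nat.card {a : Fin n // a < i ∧ πn a = a} := by
    rw [Nat.card_eq_fintype_card, Fintype.card_subtype]
    apply Finset.card_bij' (fun p _ => down p.1) (fun a _ => (a.castSucc, Fin.last n))
    · intro p hp
      rw [Finset.mem_filter, hP, Finset.mem_filter] at hp
      obtain ⟨⟨_, h1, h2, h3⟩, h4⟩ := hp
      have hp2 : p.2 = Fin.last n := by
        apply Fin.ext; rw [hlastval]; omega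
      rw [hp2] at h1 h2 h3
      have hp1n : (p.1 : ℕ) < n := by rw [hlastval] at h1; exact h1
      have hfp : π p.1 = p.1 := by
        rcases h2 with h | h
        · exact h
        · exfalso; rw [hlastval] at h; have := (π p.1).2; omega
      have hple : (p.1 : ℕ) ≤ (i : ℕ) := by
        rcases h3 with h | h
        · exfalso
          rw [hi] at h
          have := congrArg Fin.val h
          rw [hival, hlastval] at this
          omega
        · rw [hi, hival] at h; exact h
      set a := down p.1 with hadef
      have hav : (a : ℕ) = (p.1 : ℕ) := hdown p.1 hp1n
      have hai : a ≠ i := by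
        intro hc
        have : p.1 = i.castSucc := by
          apply Fin.ext; rw [hival, ← hav, hc]
        rw [this, hi'] at hfp
        have := congrArg Fin.val hfp
        rw [hlastval, hival] at this
        omega
      rw [Finset.mem_filter]
      refine ⟨Finset.mem_univ _, ?_, ?_⟩
      · have hne2 : (a : ℕ) ≠ (i : ℕ) := fun h => hai (Fin.ext h)
        simp only [Fin.lt_def]
        omega
      · rw [← hfixiff a hai]
        rw [hup p.1 hp1n]
        exact hfp
    · intro a ha
      rw [Finset.mem_filter] at ha
      obtain ⟨_, h1, h2⟩ := ha
      have hai : a ≠ i := ne_of_lt h1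
      rw [Finset.mem_filter, hP, Finset.mem_filter]
      refine ⟨⟨Finset.mem_univ _, ?_, ?_, ?_⟩, ?_⟩
      · rw [hvalcs, hlastval]; exact a.2
      · left
        rw [hfixiff a hai]
        exact h2
      · right
        rw [hi, hival, hvalcs]
        exact le_of_lt h1
      · rw [hlastval]; omega
    · intro p hp
      rw [Finset.mem_filter, hP, Finset.mem_filter] at hp
      obtain ⟨⟨_, h1, _, _⟩, h4⟩ := hp
      have hp2 : p.2 = Fin.last n := by
        apply Fin.ext; rw [hlastval]; omega
      have hp1n : (p.1 : ℕ) < n := by rw [hp2, hlastval] at h1; exact h1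
      exact Prod.ext (hup p.1 hp1n) hp2.symm
    · intro a _
      exact hdowncs a
  rw [hpart1, hpart2]
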